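/- arXiv:1307.6151 — 7 statements merged into one kernel-verified Lean document; each statement's English description precedes it below -/
import Mathlib

section
/- Let (gₙ, hₙ) be a framing for F in a Hilbert space H, and let A, B be closed densely defined operators on H with (gₙ) ⊆ dom A and (hₙ) ⊆ dom B. Let D_B ⊆ dom B* be a dense subspace of H. Assume: (1) every f ∈ F lies in dom A* and A*f ∈ F_max; (2) ⟨A*f, B*h⟩ = ⟨f, h⟩ for all f ∈ F, h ∈ D_B. Then for every f ∈ F and h ∈ D_B, ⟨f, h⟩ = lim_{N→∞} ⟨∑_{n≤N} ⟨A*f, gₙ⟩ B hₙ, h⟩. -/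
open scoped ComplexInnerProductSpace

open Filter Topology

namespace LinearPMap

variable {𝕜 E F : Type*} [RCLike 𝕜] [NormedAddCommGroup E] [InnerProductSpace 𝕜 E]
  [NormedAddCommGroup F] [InnerProductSpace 𝕜 F] [CompleteSpace E]
  {B : E →ₗ.[𝕜] F}

theorem inner_sum_smul_apply_eq_inner_adjoint (hB : Dense (B.domain : Set E))
    (y : B†.domain) {ι : Type*} (s : Finset ι) (c : ι → 𝕜) (v : ι → B.domain) :
    inner 𝕜 (y : F) (∑ n ∈ s, c n • B (v n)) = inner 𝕜 (B† y) (∑ n ∈ s, c n • (v n : E)) := by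
  simp only [inner_sum, inner_smul_right, B.adjoint_isFormalAdjoint hB y]

theorem tendsto_inner_sum_range_smul_apply (hB : Dense (B.domain : Set E)) (y : B†.domain)
    {c : ℕ → 𝕜} {v : ℕ → B.domain} {a : E} (hsum : HasSum (fun n => c n • (v n : E)) a) :
    Tendsto (fun N => inner 𝕜 (y : F) (∑ n ∈ Finset.range (N + 1), c n • B (v n))) atTop
      (𝓝 (inner 𝕜 (B† y) a)) := by
  simp only [inner_sum_smul_apply_eq_inner_adjoint hB y]
  exact tendsto_const_nhds.inner <|
    hsum.tendsto_sum_nat.comp (tendsto_add_atTop_nat 1)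

end LinearPMap

theorem framing_generating_lemma_general {H : Type*} [NormedAddCommGroup H] [InnerProductSpace ℂ H]
    [CompleteSpace H] (g h : ℕ → H) (F : Set H) (A B : H →ₗ.[ℂ] H)
    (hBdense : Dense (B.domain : Set H))
    (hh : ∀ n, h n ∈ B.domain)
    (DB : Set H) (hDBsub : DB ⊆ B.adjoint.domain)
    (hFdom : ∀ f ∈ F, f ∈ A.adjoint.domain)
    (hFmax : ∀ f (hf : f ∈ F),
      HasSum (fun n => ⟪g n, A.adjoint ⟨f, hFdom f hf⟩⟫ • h n) (A.adjoint ⟨f, hFdom f hf⟩))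
    (hAB : ∀ f (hf : f ∈ F), ∀ x (hx : x ∈ DB),
      ⟪B.adjoint ⟨x, hDBsub hx⟩, A.adjoint ⟨f, hFdom f hf⟩⟫ = ⟪x, f⟫) :
    ∀ f (hf : f ∈ F), ∀ x ∈ DB,
      Filter.Tendsto
        (fun N : ℕ =>
          ⟪x, ∑ n ∈ Finset.range (N + 1),
              ⟪g n, A.adjoint ⟨f, hFdom f hf⟩⟫ • B ⟨h n, hh n⟩⟫)
        Filter.atTop (nhds ⟪x, f⟫) := by
  intro f hf x hx
  rw [← hAB f hf x hx]
  exact LinearPMap.tendsto_inner_sum_range_smul_apply hBdense ⟨x, hDBsub hx⟩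
    (v := fun n => ⟨h n, hh n⟩) (hFmax f hf)

/-- Generating lemma for framings: under the stated conditions on the closed densely defined
operators `A`, `B`, for every `f ∈ F` and `h ∈ D_B` one has
`⟨f, h⟩ = lim_N ⟨∑_{n≤N} ⟨A*f, gₙ⟩ B hₙ, h⟩`. -/
theorem framing_generating_lemma {H : Type*} [NormedAddCommGroup H] [InnerProductSpace ℂ H]
    [CompleteSpace H] (g h : ℕ → H) (F : Set H) (A B : H →ₗ.[ℂ] H)
    (hAdense : Dense (A.domain : Set H)) (hBdense : Dense (B.domain : Set H))
    (hAclosed : A.IsClosed) (hBclosed : B.IsClosed)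
    (hg : ∀ n, g n ∈ A.domain) (hh : ∀ n, h n ∈ B.domain)
    (DB : Set H) (hDBsub : DB ⊆ B.adjoint.domain) (hDBdense : Dense DB)
    (hF : F ≠ {0})
    (hframe : ∀ f ∈ F, HasSum (fun n => ⟪g n, f⟫ • h n) f)
    (hFdom : ∀ f ∈ F, f ∈ A.adjoint.domain)
    (hFmax : ∀ f (hf : f ∈ F),
      HasSum (fun n => ⟪g n, A.adjoint ⟨f, hFdom f hf⟩⟫ • h n) (A.adjoint ⟨f, hFdom f hf⟩))
    (hAB : ∀ f (hf : f ∈ F), ∀ x (hx : x ∈ DB),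
      ⟪B.adjoint ⟨x, hDBsub hx⟩, A.adjoint ⟨f, hFdom f hf⟩⟫ = ⟪x, f⟫) :
    ∀ f (hf : f ∈ F), ∀ x ∈ DB,
      Filter.Tendsto
        (fun N : ℕ =>
          ⟪x, ∑ n ∈ Finset.range (N + 1),
              ⟪g n, A.adjoint ⟨f, hFdom f hf⟩⟫ • B ⟨h n, hh n⟩⟫)
        Filter.atTop (nhds ⟪x, f⟫) :=
  framing_generating_lemma_general g h F A B hBdense hh DB hDBsub hFdom hFmax hAB
end

section
/- Under the assumptions of the generating lemma (framing (gₙ, hₙ) for F, closed densely defined A, B with (gₙ) ⊆ dom A, (hₙ) ⊆ dom B, dense D_B ⊆ dom B*, F ⊆ {g ∈ dom A* : A*g ∈ F_max}, and ⟨A*f, B*h⟩ = ⟨f, h⟩ for f ∈ F, h ∈ D_B), if additionally the partial sums ∑_{n≤N} ⟨f, A gₙ⟩ B hₙ are norm-bounded for each f ∈ F, then the series ∑ₙ ⟨A*f, gₙ⟩ B hₙ converges weakly to f for every f ∈ F. -/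
open scoped ComplexInnerProductSpace

/-!
On the dense set `D_B`, moving `B` across the inner product turns `⟨x, ∑ₙ ⟨A*f, gₙ⟩ B hₙ⟩` into
`⟨B*x, ∑ₙ ⟨A*f, gₙ⟩ hₙ⟩`, which tends to `⟨B*x, A*f⟩ = ⟨x, f⟩` because `A*f ∈ F_max`. Since
`⟨f, A gₙ⟩ = ⟨A*f, gₙ⟩`, the partial sums are norm-bounded, so the functionals `y ↦ ⟨y, S_N⟩` are
uniformly Lipschitz and convergence on a dense set propagates to all of `H`.
-/

open Filter Topology Finset

section WeakConvergence

variable {𝕜 E : Type*} [RCLike 𝕜] [SeminormedAddCommGroup E] [InnerProductSpace 𝕜 E]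

local notation "⟪" x ", " y "⟫" => inner 𝕜 x y

theorem lipschitzWith_inner_const_right {v : E} {C : ℝ} (hv : ‖v‖ ≤ C) :
    LipschitzWith C.toNNReal fun y : E => ⟪y, v⟫ :=
  LipschitzWith.of_dist_le' fun y y' => calc
    dist ⟪y, v⟫ ⟪y', v⟫ = ‖⟪y - y', v⟫‖ := by rw [dist_eq_norm, inner_sub_left]
    _ ≤ ‖y - y'‖ * ‖v‖ := norm_inner_le_norm _ _
    _ ≤ C * dist y y' := by
      rw [dist_eq_norm, mul_comm]
      exact mul_le_mul_of_nonneg_right hv (norm_nonneg _)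

theorem tendsto_inner_of_norm_le_of_dense {ι : Type*} {l : Filter ι} {u : ι → E} {v : E}
    {C : ℝ} (hu : ∀ i, ‖u i‖ ≤ C) {D : Set E} (hD : Dense D)
    (hconv : ∀ x ∈ D, Tendsto (fun i => ⟪x, u i⟫) l (𝓝 ⟪x, v⟫)) (y : E) :
    Tendsto (fun i => ⟪y, u i⟫) l (𝓝 ⟪y, v⟫) := by
  have hequi : Equicontinuous fun i (y : E) => ⟪y, u i⟫ :=
    (LipschitzWith.uniformEquicontinuous _ _ fun i =>
      lipschitzWith_inner_const_right (hu i)).equicontinuous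
  have hclosed : IsClosed {x : E | Tendsto (fun i => ⟪x, u i⟫) l (𝓝 ⟪x, v⟫)} :=
    hequi.isClosed_setOfPred_tendsto (continuous_id.inner continuous_const)
  exact closure_minimal hconv hclosed (hD y)

end WeakConvergence

namespace LinearPMap

variable {𝕜 E F : Type*} [RCLike 𝕜] [NormedAddCommGroup E] [InnerProductSpace 𝕜 E]
  [NormedAddCommGroup F] [InnerProductSpace 𝕜 F] [CompleteSpace E]

local notation "⟪" x ", " y "⟫" => inner 𝕜 x y

theorem tendsto_inner_sum_smul_apply {B : E →ₗ.[𝕜] F} (hB : Dense (B.domain : Set E))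
    {h : ℕ → B.domain} {c : ℕ → 𝕜} {a : E} (hsum : HasSum (fun n => c n • (h n : E)) a)
    (x : B†.domain) :
    Tendsto (fun N => ⟪(x : F), ∑ n ∈ range N, c n • B (h n)⟫) atTop (𝓝 ⟪B† x, a⟫) := by
  have hmove : ∀ N, ⟪(x : F), ∑ n ∈ range N, c n • B (h n)⟫ =
      ⟪B† x, ∑ n ∈ range N, c n • (h n : E)⟫ := fun N => by
    simp only [inner_sum, inner_smul_right, adjoint_isFormalAdjoint hB x]
  simpa only [hmove] using tendsto_const_nhds.inner hsum.tendsto_sum_nat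

end LinearPMap

theorem framing_weak_convergence_general {H : Type*} [NormedAddCommGroup H] [InnerProductSpace ℂ H]
    [CompleteSpace H] (g h : ℕ → H) (F : Set H) (A B : H →ₗ.[ℂ] H)
    (hAdense : Dense (A.domain : Set H)) (hBdense : Dense (B.domain : Set H))
    (hg : ∀ n, g n ∈ A.domain) (hh : ∀ n, h n ∈ B.domain)
    (DB : Set H) (hDBsub : DB ⊆ B.adjoint.domain) (hDBdense : Dense DB)
    (hFdom : ∀ f ∈ F, f ∈ A.adjoint.domain)
    (hFmax : ∀ f (hf : f ∈ F),
      HasSum (fun n => ⟪g n, A.adjoint ⟨f, hFdom f hf⟩⟫ • h n) (A.adjoint ⟨f, hFdom f hf⟩))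
    (hAB : ∀ f (hf : f ∈ F), ∀ x (hx : x ∈ DB),
      ⟪B.adjoint ⟨x, hDBsub hx⟩, A.adjoint ⟨f, hFdom f hf⟩⟫ = ⟪x, f⟫)
    (hbound : ∀ f (hf : f ∈ F), ∃ C : ℝ, ∀ N : ℕ,
      ‖∑ n ∈ Finset.range (N + 1), ⟪A ⟨g n, hg n⟩, f⟫ • B ⟨h n, hh n⟩‖ ≤ C) :
    ∀ f (hf : f ∈ F), ∀ y : H,
      Filter.Tendsto
        (fun N : ℕ =>
          ⟪y, ∑ n ∈ Finset.range (N + 1),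
              ⟪g n, A.adjoint ⟨f, hFdom f hf⟩⟫ • B ⟨h n, hh n⟩⟫)
        Filter.atTop (nhds ⟪y, f⟫) := by
  intro f hf y
  obtain ⟨C, hC⟩ := hbound f hf
  have hcoeff : ∀ n, ⟪A ⟨g n, hg n⟩, f⟫ = ⟪g n, A.adjoint ⟨f, hFdom f hf⟩⟫ := fun n =>
    (LinearPMap.adjoint_isFormalAdjoint hAdense).symm _ ⟨f, hFdom f hf⟩
  refine tendsto_inner_of_norm_le_of_dense (fun N => by simpa only [hcoeff] using hC N)
    hDBdense (fun x hx => ?_) y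
  have hconv := (LinearPMap.tendsto_inner_sum_smul_apply (h := fun n => ⟨h n, hh n⟩) hBdense
    (hFmax f hf) ⟨x, hDBsub hx⟩).comp (tendsto_add_atTop_nat 1)
  rwa [hAB f hf x hx] at hconv

/-- If, in addition to the hypotheses of the generating lemma, the partial sums
`∑_{n≤N} ⟨f, A gₙ⟩ B hₙ` are norm-bounded, then the series `∑ₙ ⟨A*f, gₙ⟩ B hₙ`
converges weakly to `f` for every `f ∈ F`. -/
theorem framing_weak_convergence {H : Type*} [NormedAddCommGroup H] [InnerProductSpace ℂ H]
    [CompleteSpace H] (g h : ℕ → H) (F : Set H) (A B : H →ₗ.[ℂ] H)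
    (hAdense : Dense (A.domain : Set H)) (hBdense : Dense (B.domain : Set H))
    (hAclosed : A.IsClosed) (hBclosed : B.IsClosed)
    (hg : ∀ n, g n ∈ A.domain) (hh : ∀ n, h n ∈ B.domain)
    (DB : Set H) (hDBsub : DB ⊆ B.adjoint.domain) (hDBdense : Dense DB)
    (hF : F ≠ {0})
    (hframe : ∀ f ∈ F, HasSum (fun n => ⟪g n, f⟫ • h n) f)
    (hFdom : ∀ f ∈ F, f ∈ A.adjoint.domain)
    (hFmax : ∀ f (hf : f ∈ F),
      HasSum (fun n => ⟪g n, A.adjoint ⟨f, hFdom f hf⟩⟫ • h n) (A.adjoint ⟨f, hFdom f hf⟩))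
    (hAB : ∀ f (hf : f ∈ F), ∀ x (hx : x ∈ DB),
      ⟪B.adjoint ⟨x, hDBsub hx⟩, A.adjoint ⟨f, hFdom f hf⟩⟫ = ⟪x, f⟫)
    (hbound : ∀ f (hf : f ∈ F), ∃ C : ℝ, ∀ N : ℕ,
      ‖∑ n ∈ Finset.range (N + 1), ⟪A ⟨g n, hg n⟩, f⟫ • B ⟨h n, hh n⟩‖ ≤ C) :
    ∀ f (hf : f ∈ F), ∀ y : H,
      Filter.Tendsto
        (fun N : ℕ =>
          ⟪y, ∑ n ∈ Finset.range (N + 1),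
              ⟪g n, A.adjoint ⟨f, hFdom f hf⟩⟫ • B ⟨h n, hh n⟩⟫)
        Filter.atTop (nhds ⟪y, f⟫) :=
  framing_weak_convergence_general g h F A B hAdense hBdense hg hh DB hDBsub hDBdense hFdom hFmax
    hAB hbound
end

section
/- Under the assumptions of the generating lemma, if for every f ∈ F the series ∑ₙ ⟨f, A gₙ⟩ B hₙ is weakly subseries convergent (every subseries converges weakly), then (A gₙ, B hₙ) is a framing for F, i.e. f = ∑ₙ ⟨f, A gₙ⟩ B hₙ unconditionally (in norm) for all f ∈ F. -/
open scoped ComplexInnerProductSpace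

/-!
Pairing with a vector `y` turns a weakly subseries convergent series into a scalar series all of
whose subseries converge; splitting it according to the signs of real and imaginary parts shows
that it converges absolutely, and Banach–Steinhaus then bounds `‖∑ n ∈ t, c n‖` uniformly over
finite sets `t`. If the series were not unconditionally Cauchy, there would be infinitely many
disjoint blocks of norm at least `ε`. With suitably chosen signs, `M` of them add up to a vector of
squared norm at least `M ε²`, but such a signed sum is a difference of two finite partial sums and
so has norm at most `2 C`.
The limit is identified with `f` by pairing with the dense set `DB` and moving `A` and `B` across
the inner product.
-/

open Filter Finset Function Topology
open scoped InnerProductSpace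

lemma Real.summable_of_forall_tendsto_sum_indicator {a : ℕ → ℝ}
    (ha : ∀ s : Set ℕ, ∃ l, Tendsto (fun N => ∑ n ∈ range N, s.indicator a n) atTop (𝓝 l)) :
    Summable a := by
  have summable_of_nonneg : ∀ (b : ℕ → ℝ) (s : Set ℕ), (∀ n ∈ s, 0 ≤ b n) →
      (∃ l, Tendsto (fun N => ∑ n ∈ range N, s.indicator b n) atTop (𝓝 l)) →
      Summable (s.indicator b) := fun b s hb ⟨l, hl⟩ =>
    ((hasSum_iff_tendsto_nat_of_nonneg (Set.indicator_nonneg hb) l).2 hl).summable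
  set s : Set ℕ := {n | 0 ≤ a n}
  have hs : Summable (s.indicator a) := summable_of_nonneg a s (fun _ hn => hn) (ha s)
  have hsc : Summable (sᶜ.indicator (-a)) := by
    refine summable_of_nonneg _ _ (fun n (hn : ¬ 0 ≤ a n) => neg_nonneg.2 (not_le.1 hn).le) ?_
    obtain ⟨l, hl⟩ := ha sᶜ
    refine ⟨-l, hl.neg.congr fun N => ?_⟩
    simp only [Set.indicator_neg', Pi.neg_apply, sum_neg_distrib]
  have hsplit : a = s.indicator a - sᶜ.indicator (-a) := by
    ext n
    by_cases hn : 0 ≤ a n <;> simp [s, hn]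
  rw [hsplit]
  exact hs.sub hsc

lemma RCLike.summable_of_forall_tendsto_sum_indicator {𝕜 : Type*} [RCLike 𝕜] {a : ℕ → 𝕜}
    (ha : ∀ s : Set ℕ, ∃ l, Tendsto (fun N => ∑ n ∈ range N, s.indicator a n) atTop (𝓝 l)) :
    Summable a := by
  have hpart : ∀ φ : 𝕜 →L[ℝ] ℝ, Summable fun n => φ (a n) := fun φ =>
    Real.summable_of_forall_tendsto_sum_indicator fun s => by
      obtain ⟨l, hl⟩ := ha s
      refine ⟨φ l, ((φ.continuous.tendsto l).comp hl).congr fun N => ?_⟩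
      simp only [Function.comp_apply, map_sum]
      exact sum_congr rfl fun n _ => by by_cases hn : n ∈ s <;> simp [hn]
  have hre := (RCLike.summable_ofReal 𝕜).2 (hpart RCLike.reCLM)
  have him := ((RCLike.summable_ofReal 𝕜).2 (hpart RCLike.imCLM)).mul_right (RCLike.I : 𝕜)
  simpa [RCLike.re_add_im] using hre.add him

lemma exists_pairwise_disjoint_of_forall_exists_disjoint {ι : Type*} {p : Finset ι → Prop}
    (h : ∀ s, ∃ t, Disjoint t s ∧ p t) :
    ∃ T : ℕ → Finset ι, Pairwise (Disjoint on T) ∧ ∀ k, p (T k) := by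
  classical
  choose t hdisj hp using h
  let U : ℕ → Finset ι := fun k => Nat.rec ∅ (fun _ U => U ∪ t U) k
  have hU : Monotone U := monotone_nat_of_le_succ fun k => subset_union_left
  have hlt : ∀ i j, i < j → Disjoint (t (U i)) (t (U j)) := fun i j hij =>
    (hdisj (U j)).symm.mono_left (subset_union_right.trans (hU hij))
  refine ⟨fun k => t (U k), fun i j hij => ?_, fun k => hp (U k)⟩
  rcases hij.lt_or_gt with hij | hij
  · exact hlt i j hij
  · exact (hlt j i hij).symm

/-- Choosing each sign so that the new term is not obtuse to the current sum makes the squared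
norms add up, as for orthogonal vectors. -/
lemma exists_subset_sum_norm_sq_le (𝕜 : Type*) {E ι : Type*} [RCLike 𝕜] [NormedAddCommGroup E]
    [InnerProductSpace 𝕜 E] [DecidableEq ι] (v : ι → E) (u : Finset ι) :
    ∃ P ⊆ u, ∑ k ∈ u, ‖v k‖ ^ 2 ≤ ‖∑ k ∈ P, v k - ∑ k ∈ u \ P, v k‖ ^ 2 := by
  induction u using Finset.induction_on with
  | empty => exact ⟨∅, subset_rfl, by simp⟩
  | insert a u ha ih =>
    obtain ⟨P, hPu, hP⟩ := ih
    set D := ∑ k ∈ P, v k - ∑ k ∈ u \ P, v k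
    have haP : a ∉ P := fun h => ha (hPu h)
    rw [sum_insert ha]
    by_cases hre : 0 ≤ RCLike.re ⟪D, v a⟫_𝕜
    · refine ⟨insert a P, insert_subset_insert a hPu, ?_⟩
      rw [sum_insert haP, insert_sdiff_insert, sdiff_insert_of_notMem ha,
        show v a + ∑ k ∈ P, v k - ∑ k ∈ u \ P, v k = D + v a by simp only [D]; abel,
        @norm_add_sq 𝕜]
      linarith
    · refine ⟨P, hPu.trans (subset_insert a u), ?_⟩
      rw [insert_sdiff_of_notMem _ haP, sum_insert fun h => ha (mem_sdiff.1 h).1,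
        show ∑ k ∈ P, v k - (v a + ∑ k ∈ u \ P, v k) = D - v a by simp only [D]; abel,
        @norm_sub_sq 𝕜]
      linarith

lemma summable_of_forall_norm_sum_le (𝕜 : Type*) {E ι : Type*} [RCLike 𝕜] [NormedAddCommGroup E]
    [InnerProductSpace 𝕜 E] [CompleteSpace E] {c : ι → E} {C : ℝ}
    (hC : ∀ t : Finset ι, ‖∑ n ∈ t, c n‖ ≤ C) : Summable c := by
  classical
  by_contra hc
  rw [summable_iff_vanishing_norm] at hc
  push Not at hc
  obtain ⟨ε, hε, hblock⟩ := hc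
  obtain ⟨T, hT, hTε⟩ := exists_pairwise_disjoint_of_forall_exists_disjoint hblock
  have hunion : ∀ K : Finset ℕ, ‖∑ k ∈ K, ∑ n ∈ T k, c n‖ ≤ C := fun K => by
    rw [← sum_biUnion (hT.set_pairwise K)]
    exact hC _
  obtain ⟨M, hM⟩ := exists_nat_gt (4 * C ^ 2 / ε ^ 2)
  obtain ⟨P, -, hP⟩ := exists_subset_sum_norm_sq_le 𝕜 (fun k => ∑ n ∈ T k, c n) (range M)
  have hlower : M * ε ^ 2 ≤ ∑ k ∈ range M, ‖∑ n ∈ T k, c n‖ ^ 2 := by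
    simpa using sum_le_sum fun k (_ : k ∈ range M) => pow_le_pow_left₀ hε.le (hTε k) 2
  have hupper : ‖∑ k ∈ P, ∑ n ∈ T k, c n - ∑ k ∈ range M \ P, ∑ n ∈ T k, c n‖ ≤ 2 * C :=
    (norm_sub_le _ _).trans (by linarith [hunion P, hunion (range M \ P)])
  rw [div_lt_iff₀ (by positivity)] at hM
  nlinarith [norm_nonneg (∑ k ∈ P, ∑ n ∈ T k, c n - ∑ k ∈ range M \ P, ∑ n ∈ T k, c n)]

section WeaklySubseriesConvergent

variable (𝕜 : Type*) {E : Type*} [RCLike 𝕜] [NormedAddCommGroup E] [InnerProductSpace 𝕜 E]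

def IsWeaklySubseriesConvergent (c : ℕ → E) : Prop :=
  ∀ s : Set ℕ, ∃ x : E, ∀ y : E,
    Tendsto (fun N => ⟪y, ∑ n ∈ range (N + 1), s.indicator c n⟫_𝕜) atTop (𝓝 ⟪y, x⟫_𝕜)

variable {𝕜} {c : ℕ → E}

lemma IsWeaklySubseriesConvergent.summable_inner (hc : IsWeaklySubseriesConvergent 𝕜 c)
    (y : E) : Summable fun n => ⟪y, c n⟫_𝕜 :=
  RCLike.summable_of_forall_tendsto_sum_indicator fun s => by
    obtain ⟨x, hx⟩ := hc s
    refine ⟨⟪y, x⟫_𝕜, (tendsto_add_atTop_iff_nat 1).1 ((hx y).congr fun N => ?_)⟩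
    rw [inner_sum]
    exact sum_congr rfl fun n _ => by by_cases hn : n ∈ s <;> simp [hn]

lemma IsWeaklySubseriesConvergent.exists_forall_norm_sum_le [CompleteSpace E]
    (hc : IsWeaklySubseriesConvergent 𝕜 c) : ∃ C, ∀ t : Finset ℕ, ‖∑ n ∈ t, c n‖ ≤ C := by
  obtain ⟨C, hC⟩ := banach_steinhaus (g := fun t : Finset ℕ => innerSL 𝕜 (∑ n ∈ t, c n))
    fun y => ⟨∑' n, ‖⟪y, c n⟫_𝕜‖, fun t => by
      rw [innerSL_apply_apply, norm_inner_symm, inner_sum]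
      exact (norm_sum_le _ _).trans
        ((summable_norm_iff.2 (hc.summable_inner y)).sum_le_tsum t fun n _ => norm_nonneg _)⟩
  exact ⟨C, fun t => (innerSL_apply_norm 𝕜 _).symm.trans_le (hC t)⟩

theorem IsWeaklySubseriesConvergent.summable [CompleteSpace E]
    (hc : IsWeaklySubseriesConvergent 𝕜 c) : Summable c :=
  let ⟨_, hC⟩ := hc.exists_forall_norm_sum_le
  summable_of_forall_norm_sum_le 𝕜 hC

end WeaklySubseriesConvergent

theorem framing_orlicz_pettis_general {H : Type*} [NormedAddCommGroup H] [InnerProductSpace ℂ H]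
    [CompleteSpace H] (g h : ℕ → H) (F : Set H) (A B : H →ₗ.[ℂ] H)
    (hAdense : Dense (A.domain : Set H)) (hBdense : Dense (B.domain : Set H))
    (hg : ∀ n, g n ∈ A.domain) (hh : ∀ n, h n ∈ B.domain)
    (DB : Set H) (hDBsub : DB ⊆ B.adjoint.domain) (hDBdense : Dense DB)
    (hFdom : ∀ f ∈ F, f ∈ A.adjoint.domain)
    (hFmax : ∀ f (hf : f ∈ F),
      HasSum (fun n => ⟪g n, A.adjoint ⟨f, hFdom f hf⟩⟫ • h n) (A.adjoint ⟨f, hFdom f hf⟩))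
    (hAB : ∀ f (hf : f ∈ F), ∀ x (hx : x ∈ DB),
      ⟪B.adjoint ⟨x, hDBsub hx⟩, A.adjoint ⟨f, hFdom f hf⟩⟫ = ⟪x, f⟫)
    (hsub : ∀ f ∈ F, ∀ s : Set ℕ, ∃ x : H, ∀ y : H,
      Filter.Tendsto
        (fun N : ℕ =>
          ⟪y, ∑ n ∈ Finset.range (N + 1),
              Set.indicator s (fun n => ⟪A ⟨g n, hg n⟩, f⟫ • B ⟨h n, hh n⟩) n⟫)
        Filter.atTop (nhds ⟪y, x⟫)) :
    ∀ f ∈ F, HasSum (fun n => ⟪A ⟨g n, hg n⟩, f⟫ • B ⟨h n, hh n⟩) f := by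
  intro f hf
  obtain ⟨x, hx⟩ := IsWeaklySubseriesConvergent.summable (𝕜 := ℂ) (hsub f hf)
  suffices x = f by rwa [this] at hx
  refine hDBdense.eq_of_inner_right ℂ fun y hy => ?_
  set f' : A.adjoint.domain := ⟨f, hFdom f hf⟩
  set y' : B.adjoint.domain := ⟨y, hDBsub hy⟩
  have hterm : ∀ n, ⟪y, ⟪A ⟨g n, hg n⟩, f⟫ • B ⟨h n, hh n⟩⟫ =
      ⟪B.adjoint y', ⟪g n, A.adjoint f'⟫ • h n⟫ := fun n => by
    rw [inner_smul_right, inner_smul_right]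
    exact congr_arg₂ (· * ·) ((LinearPMap.adjoint_isFormalAdjoint hAdense).symm ⟨g n, hg n⟩ f')
      (LinearPMap.adjoint_isFormalAdjoint hBdense y' ⟨h n, hh n⟩).symm
  calc ⟪y, x⟫ = ⟪B.adjoint y', A.adjoint f'⟫ :=
        ((innerSL ℂ y).hasSum hx).unique <| by
          simpa only [innerSL_apply_apply, hterm] using (innerSL ℂ _).hasSum (hFmax f hf)
    _ = ⟪y, f⟫ := hAB f hf y hy

/-- Orlicz–Pettis step: under the hypotheses of the generating lemma, if for every `f ∈ F`
the series `∑ₙ ⟨f, A gₙ⟩ B hₙ` is weakly subseries convergent, then `(A gₙ, B hₙ)` is a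
framing for `F`: the series converges unconditionally (in norm) to `f`. -/
theorem framing_orlicz_pettis {H : Type*} [NormedAddCommGroup H] [InnerProductSpace ℂ H]
    [CompleteSpace H] (g h : ℕ → H) (F : Set H) (A B : H →ₗ.[ℂ] H)
    (hAdense : Dense (A.domain : Set H)) (hBdense : Dense (B.domain : Set H))
    (hAclosed : A.IsClosed) (hBclosed : B.IsClosed)
    (hg : ∀ n, g n ∈ A.domain) (hh : ∀ n, h n ∈ B.domain)
    (DB : Set H) (hDBsub : DB ⊆ B.adjoint.domain) (hDBdense : Dense DB)
    (hF : F ≠ {0})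
    (hframe : ∀ f ∈ F, HasSum (fun n => ⟪g n, f⟫ • h n) f)
    (hFdom : ∀ f ∈ F, f ∈ A.adjoint.domain)
    (hFmax : ∀ f (hf : f ∈ F),
      HasSum (fun n => ⟪g n, A.adjoint ⟨f, hFdom f hf⟩⟫ • h n) (A.adjoint ⟨f, hFdom f hf⟩))
    (hAB : ∀ f (hf : f ∈ F), ∀ x (hx : x ∈ DB),
      ⟪B.adjoint ⟨x, hDBsub hx⟩, A.adjoint ⟨f, hFdom f hf⟩⟫ = ⟪x, f⟫)
    (hsub : ∀ f ∈ F, ∀ s : Set ℕ, ∃ x : H, ∀ y : H,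
      Filter.Tendsto
        (fun N : ℕ =>
          ⟪y, ∑ n ∈ Finset.range (N + 1),
              Set.indicator s (fun n => ⟪A ⟨g n, hg n⟩, f⟫ • B ⟨h n, hh n⟩) n⟫)
        Filter.atTop (nhds ⟪y, x⟫)) :
    ∀ f ∈ F, HasSum (fun n => ⟪A ⟨g n, hg n⟩, f⟫ • B ⟨h n, hh n⟩) f :=
  framing_orlicz_pettis_general g h F A B hAdense hBdense hg hh DB hDBsub hDBdense hFdom hFmax hAB
    hsub
end

section
/- Under the assumptions of the generating lemma, if B is a bounded operator, then (A gₙ, B hₙ) is a framing for F: for every f ∈ F, the series ∑ₙ ⟨f, A gₙ⟩ B hₙ converges unconditionally to f. -/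
open scoped ComplexInnerProductSpace

/-- If `B` is bounded, then under the hypotheses of the generating lemma `(A gₙ, B hₙ)` is a
framing for `F`: for every `f ∈ F` the series `∑ₙ ⟨f, A gₙ⟩ B hₙ` converges unconditionally
to `f`. -/
theorem framing_bounded_B {H : Type*} [NormedAddCommGroup H] [InnerProductSpace ℂ H]
    [CompleteSpace H] (g h : ℕ → H) (F : Set H) (A : H →ₗ.[ℂ] H) (B : H →L[ℂ] H)
    (hAdense : Dense (A.domain : Set H)) (hAclosed : A.IsClosed)
    (hg : ∀ n, g n ∈ A.domain)
    (hF : F ≠ {0})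
    (hframe : ∀ f ∈ F, HasSum (fun n => ⟪g n, f⟫ • h n) f)
    (hFdom : ∀ f ∈ F, f ∈ A.adjoint.domain)
    (hFmax : ∀ f (hf : f ∈ F),
      HasSum (fun n => ⟪g n, A.adjoint ⟨f, hFdom f hf⟩⟫ • h n) (A.adjoint ⟨f, hFdom f hf⟩))
    (hAB : ∀ f (hf : f ∈ F), ∀ x : H,
      ⟪(ContinuousLinearMap.adjoint B) x, A.adjoint ⟨f, hFdom f hf⟩⟫ = ⟪x, f⟫) :
    ∀ f ∈ F, HasSum (fun n => ⟪A ⟨g n, hg n⟩, f⟫ • B (h n)) f := by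
  intro f hf
  set φ : H := A.adjoint ⟨f, hFdom f hf⟩ with hφ
  have hBφ : B φ = f := by
    apply ext_inner_left ℂ
    intro x
    rw [← ContinuousLinearMap.adjoint_inner_left]
    exact hAB f hf x
  have hsum := (hFmax f hf).mapL B
  rw [hBφ] at hsum
  convert hsum using 2 with n
  rw [map_smul]
  congr 1
  have := LinearPMap.adjoint_isFormalAdjoint hAdense ⟨f, hFdom f hf⟩ ⟨g n, hg n⟩
  rw [← inner_conj_symm, ← inner_conj_symm (g n) φ]
  exact congrArg _ this.symm
end

section
/- Let S be a monoid, E, F vector spaces, φ : S → L(F, E), and construct D = span{φ_{s,f}}, Φ(u)φ_{s,f} = φ_{us,f}, T : F → D with Tf = φ_{1,f}, and S₀ : D → E (linear) with S₀ φ_{s,f} = φ(s) f. Then: (a) Φ : S → L(D) is a unital monoid homomorphism (Φ(uv) = Φ(u)Φ(v), Φ(1) = id), and if S is commutative the operators Φ(u) mutually commute; (b) φ(u) = S₀ ∘ Φ(u) ∘ T for all u ∈ S; (c) D = span{Φ(u) T f : u ∈ S, f ∈ F}. -/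
/-- The linear span `D = span{φ_{s,f}} ⊆ E^S`, where `φ_{s,f}(t) = φ(ts) f`. -/
def dilSpan (K : Type*) {S E F : Type*} [Field K] [Monoid S]
    [AddCommGroup E] [Module K E] [AddCommGroup F] [Module K F]
    (φ : S → (F →ₗ[K] E)) : Submodule K (S → E) :=
  Submodule.span K {w : S → E | ∃ s f, w = fun t => φ (t * s) f}

theorem dilSpan_gen_mem {K : Type*} {S E F : Type*} [Field K] [Monoid S]
    [AddCommGroup E] [Module K E] [AddCommGroup F] [Module K F]
    (φ : S → (F →ₗ[K] E)) (s : S) (f : F) :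
    (fun t => φ (t * s) f) ∈ dilSpan K φ :=
  Submodule.subset_span ⟨s, f, rfl⟩


def dilGen {K S E F : Type*} [Field K] [Monoid S]
    [AddCommGroup E] [Module K E] [AddCommGroup F] [Module K F]
    (φ : S → (F →ₗ[K] E)) (s : S) (f : F) : dilSpan K φ :=
  ⟨fun t => φ (t * s) f, dilSpan_gen_mem φ s f⟩

theorem dilGen_span_top {K S E F : Type*} [Field K] [Monoid S]
    [AddCommGroup E] [Module K E] [AddCommGroup F] [Module K F]
    (φ : S → (F →ₗ[K] E)) :
    Submodule.span K (Set.range fun p : S × F => dilGen φ p.1 p.2) = ⊤ := by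
  rw [eq_top_iff]
  rintro ⟨w, hw⟩ -
  have h : w ∈ (Submodule.span K (Set.range fun p : S × F => dilGen φ p.1 p.2)).map
      (dilSpan K φ).subtype := by
    refine Submodule.span_le.2 ?_ hw
    rintro _ ⟨s, f, rfl⟩
    exact ⟨dilGen φ s f, Submodule.subset_span ⟨(s, f), rfl⟩, rfl⟩
  obtain ⟨y, hy, hyw⟩ := h
  have : y = ⟨w, hw⟩ := Subtype.ext hyw
  exact this ▸ hy

/-- The algebraic dilation theorem: `Φ` is a unital monoid homomorphism (with commuting range
if `S` is commutative), the dilation formula `φ(u) = S₀ ∘ Φ(u) ∘ T` holds, and the dilation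
is minimal: `D = span{Φ(u) T f}`. -/
theorem algebraic_dilation {K S E F : Type*} [Field K] [Monoid S]
    [AddCommGroup E] [Module K E] [AddCommGroup F] [Module K F]
    (φ : S → (F →ₗ[K] E))
    (Φ : S → (dilSpan K φ →ₗ[K] dilSpan K φ))
    (hΦ : ∀ (u s : S) (f : F),
      Φ u ⟨fun t => φ (t * s) f, dilSpan_gen_mem φ s f⟩ =
        ⟨fun t => φ (t * (u * s)) f, dilSpan_gen_mem φ (u * s) f⟩)
    (T : F →ₗ[K] dilSpan K φ)
    (hT : ∀ f : F, T f = ⟨fun t => φ (t * 1) f, dilSpan_gen_mem φ 1 f⟩)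
    (S₀ : dilSpan K φ →ₗ[K] E)
    (hS₀ : ∀ (s : S) (f : F),
      S₀ ⟨fun t => φ (t * s) f, dilSpan_gen_mem φ s f⟩ = φ s f) :
    (∀ u v : S, Φ (u * v) = (Φ u).comp (Φ v)) ∧
    Φ 1 = LinearMap.id ∧
    ((∀ a b : S, a * b = b * a) →
      ∀ u v : S, (Φ u).comp (Φ v) = (Φ v).comp (Φ u)) ∧
    (∀ (u : S) (f : F), φ u f = S₀ (Φ u (T f))) ∧
    Submodule.span K (Set.range fun p : S × F => Φ p.1 (T p.2)) = ⊤ := by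
  have hΦ' : ∀ (u s : S) (f : F), Φ u (dilGen φ s f) = dilGen φ (u * s) f := hΦ
  have hT' : ∀ f : F, T f = dilGen φ 1 f := hT
  have hS₀' : ∀ (s : S) (f : F), S₀ (dilGen φ s f) = φ s f := hS₀
  refine ⟨?_, ?_, ?_, ?_, ?_⟩
  · intro u v
    apply LinearMap.ext_on (dilGen_span_top φ)
    rintro _ ⟨⟨s, f⟩, rfl⟩
    simp only [LinearMap.comp_apply, hΦ', mul_assoc]
  · apply LinearMap.ext_on (dilGen_span_top φ)
    rintro _ ⟨⟨s, f⟩, rfl⟩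
    simp only [LinearMap.id_apply, hΦ', one_mul]
  · intro hc u v
    apply LinearMap.ext_on (dilGen_span_top φ)
    rintro _ ⟨⟨s, f⟩, rfl⟩
    simp only [LinearMap.comp_apply, hΦ']
    rw [← mul_assoc, hc u v, mul_assoc]
  · intro u f
    rw [hT', hΦ', mul_one, hS₀']
  · have h : (fun p : S × F => Φ p.1 (T p.2)) = fun p : S × F => dilGen φ p.1 p.2 :=
      funext fun p => by rw [hT', hΦ', mul_one]
    rw [h, dilGen_span_top]
end

section
/- Let Φ be the minimal dilation of φ and equip D with the topology of pointwise convergence. If (s_α) is a net in S such that φ(t s_α u) f → φ(t s u) f in E for all t, u ∈ S and f ∈ F, then Φ(s_α) w → Φ(s) w for every w ∈ D. -/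
open Filter Topology

theorem tendsto_linearMap_apply_of_span_eq_top {R M N ι : Type*} [Semiring R]
    [AddCommMonoid M] [Module R M] [AddCommMonoid N] [Module R N] [TopologicalSpace N]
    [ContinuousAdd N] [ContinuousConstSMul R N]
    {T : ι → M →ₗ[R] N} {T₀ : M →ₗ[R] N} {l : Filter ι} {s : Set M}
    (hs : Submodule.span R s = ⊤) (h : ∀ w ∈ s, Tendsto (fun a => T a w) l (𝓝 (T₀ w)))
    (w : M) : Tendsto (fun a => T a w) l (𝓝 (T₀ w)) := by
  induction (hs ▸ Submodule.mem_top : w ∈ Submodule.span R s) using Submodule.span_induction with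
  | mem w hw => exact h w hw
  | zero => simpa only [map_zero] using tendsto_const_nhds
  | add x y _ _ hx hy => simpa only [map_add] using hx.add hy
  | smul c x _ hx => simpa only [map_smul] using hx.const_smul c

/-- Continuity of the minimal dilation along nets: if `φ(t s_α u) f → φ(t s u) f` for all
`t, u ∈ S`, `f ∈ F`, then `Φ(s_α) w → Φ(s) w` for every `w ∈ D` in the Tikhonov topology. -/
theorem dilation_net_convergence {K S E F ι : Type*} [Field K] [Monoid S]
    [AddCommGroup E] [Module K E] [TopologicalSpace E]
    [ContinuousAdd E] [ContinuousConstSMul K E]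
    [AddCommGroup F] [Module K F]
    (φ : S → (F →ₗ[K] E))
    (Φ : S → (dilSpan K φ →ₗ[K] dilSpan K φ))
    (hΦ : ∀ (u s : S) (f : F),
      Φ u ⟨fun t => φ (t * s) f, dilSpan_gen_mem φ s f⟩ =
        ⟨fun t => φ (t * (u * s)) f, dilSpan_gen_mem φ (u * s) f⟩)
    (l : Filter ι) (sα : ι → S) (s : S)
    (hconv : ∀ (t u : S) (f : F),
      Filter.Tendsto (fun a => φ (t * sα a * u) f) l (nhds (φ (t * s * u) f))) :
    ∀ w : dilSpan K φ,
      Filter.Tendsto (fun a => Φ (sα a) w) l (nhds (Φ s w)) := by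
  intro w
  rw [tendsto_subtype_rng]
  refine tendsto_linearMap_apply_of_span_eq_top (T := fun a => (dilSpan K φ).subtype ∘ₗ Φ (sα a))
    (T₀ := (dilSpan K φ).subtype ∘ₗ Φ s) Submodule.span_span_coe_preimage ?_ w
  rintro ⟨_, _⟩ ⟨s', f, rfl⟩
  simp only [LinearMap.comp_apply, Submodule.subtype_apply, hΦ, tendsto_pi_nhds]
  intro t
  simpa only [mul_assoc] using hconv t s' f
end

section
/- Let φ : S → L(F,E) be positive definite on a unital *-semigroup S, and suppose that for a given u ∈ S there is a constant c(u) ≥ 0 such that ∑_{i,j} ⟨φ(sⱼ* u* u sᵢ) fᵢ, fⱼ⟩_E ≤ c(u) ∑_{i,j} ⟨φ(sⱼ* sᵢ) fᵢ, fⱼ⟩_E for all finite families (sₖ) ⊆ S, (fₖ) ⊆ F. Then the dilation operator Φ(u) is bounded on (D, ⟨·,·⟩_D) with ‖Φ(u)‖ ≤ c(u)^{1/2}, and hence extends to a bounded operator on the Hilbert-space completion K of D. -/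
open scoped ComplexInnerProductSpace ComplexOrder

/-- Boundedness condition (α): if
`∑_{i,j} ⟨φ(sⱼ* u* u sᵢ) fᵢ, fⱼ⟩ ≤ c(u) ∑_{i,j} ⟨φ(sⱼ* sᵢ) fᵢ, fⱼ⟩` for all finite families,
then the dilation operator `Φ(u)` is bounded on `(D, ⟨·,·⟩_D)` with norm at most `c(u)^½`
(hence extends to a bounded operator on the Hilbert space completion of `D`). -/
theorem dilation_bounded {S E : Type*} [Monoid S] [StarMul S]
    [NormedAddCommGroup E] [InnerProductSpace ℂ E] (F : Submodule ℂ E)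
    (φ : S → (↥F →ₗ[ℂ] E))
    (hpd : ∀ (n : ℕ) (s : Fin n → S) (f : Fin n → ↥F),
      0 ≤ ∑ i, ∑ j, ⟪(f j : E), φ (star (s j) * s i) (f i)⟫)
    (Φ : S → (dilSpan ℂ φ →ₗ[ℂ] dilSpan ℂ φ))
    (hΦ : ∀ (u s : S) (f : ↥F),
      Φ u ⟨fun t => φ (t * s) f, dilSpan_gen_mem φ s f⟩ =
        ⟨fun t => φ (t * (u * s)) f, dilSpan_gen_mem φ (u * s) f⟩)
    (ip : dilSpan ℂ φ → dilSpan ℂ φ → ℂ)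
    (hip : ∀ (s t : S) (f g : ↥F),
      ip ⟨fun t' => φ (t' * s) f, dilSpan_gen_mem φ s f⟩
         ⟨fun t' => φ (t' * t) g, dilSpan_gen_mem φ t g⟩ =
        ⟪(g : E), φ (star t * s) f⟫)
    (hip_lin : ∀ (a : ℂ) (x y z : dilSpan ℂ φ), ip (a • x + y) z = a * ip x z + ip y z)
    (hip_symm : ∀ x y : dilSpan ℂ φ, ip y x = (starRingEnd ℂ) (ip x y))
    (hip_pos : ∀ x : dilSpan ℂ φ, 0 ≤ ip x x)
    (u : S) (c : ℝ) (hc : 0 ≤ c)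
    (hα : ∀ (n : ℕ) (s : Fin n → S) (f : Fin n → ↥F),
      (∑ i, ∑ j, ⟪(f j : E), φ (star (s j) * (star u * (u * s i))) (f i)⟫) ≤
        (c : ℂ) * ∑ i, ∑ j, ⟪(f j : E), φ (star (s j) * s i) (f i)⟫) :
    ∀ x : dilSpan ℂ φ,
      Real.sqrt (ip (Φ u x) (Φ u x)).re ≤ Real.sqrt c * Real.sqrt (ip x x).re := by

  classical
  -- basic algebraic properties of `ip`
  have hip0 : ∀ z, ip 0 z = 0 := by
    intro z
    have h := hip_lin 1 0 0 z
    simp only [one_smul, add_zero, one_mul] at h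
    linear_combination -h
  have hsmul : ∀ (a : ℂ) (x z : dilSpan ℂ φ), ip (a • x) z = a * ip x z := by
    intro a x z
    have h := hip_lin a x 0 z
    simpa [hip0] using h
  have hadd : ∀ x y z : dilSpan ℂ φ, ip (x + y) z = ip x z + ip y z := by
    intro x y z
    have h := hip_lin 1 x y z
    simpa using h
  have hsumL : ∀ {n : ℕ} (x : Fin n → dilSpan ℂ φ) (z : dilSpan ℂ φ),
      ip (∑ i, x i) z = ∑ i, ip (x i) z := by
    intro n x z
    let L : dilSpan ℂ φ →ₗ[ℂ] ℂ :=
      { toFun := fun w => ip w z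
        map_add' := fun a b => hadd a b z
        map_smul' := fun a b => hsmul a b z }
    exact map_sum L x Finset.univ
  have hsumR : ∀ {n : ℕ} (x : Fin n → dilSpan ℂ φ) (z : dilSpan ℂ φ),
      ip z (∑ i, x i) = ∑ i, ip z (x i) := by
    intro n x z
    rw [hip_symm (∑ i, x i) z, hsumL, map_sum]
    exact Finset.sum_congr rfl fun i _ => (hip_symm (x i) z).symm
  -- decomposition of elements of the span
  have hdec : ∀ x : dilSpan ℂ φ, ∃ (n : ℕ) (s : Fin n → S) (f : Fin n → ↥F),
      x = ∑ i, (⟨fun t => φ (t * s i) (f i), dilSpan_gen_mem φ (s i) (f i)⟩ : dilSpan ℂ φ) := by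
    intro x
    have hx : (x : S → E) ∈ Submodule.span ℂ {w : S → E | ∃ s f, w = fun t => φ (t * s) f} :=
      x.2
    rw [Submodule.mem_span_set'] at hx
    obtain ⟨n, a, g, hg⟩ := hx
    choose s f hf using fun i => (g i).2
    refine ⟨n, s, fun i => a i • f i, ?_⟩
    apply Subtype.ext
    rw [← hg]
    push_cast
    refine Finset.sum_congr rfl fun i _ => ?_
    rw [hf i]
    funext t
    simp
  intro x
  obtain ⟨n, s, f, hx⟩ := hdec x
  set y : Fin n → dilSpan ℂ φ :=
    fun i => ⟨fun t => φ (t * s i) (f i), dilSpan_gen_mem φ (s i) (f i)⟩ with hy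
  have hΦx : Φ u x = ∑ i, (⟨fun t => φ (t * (u * s i)) (f i),
      dilSpan_gen_mem φ (u * s i) (f i)⟩ : dilSpan ℂ φ) := by
    rw [hx, map_sum]
    exact Finset.sum_congr rfl fun i _ => hΦ u (s i) (f i)
  have hipxx : ip x x = ∑ i, ∑ j, ⟪(f j : E), φ (star (s j) * s i) (f i)⟫ := by
    rw [hx, hsumL]
    refine Finset.sum_congr rfl fun i _ => ?_
    rw [hsumR]
    exact Finset.sum_congr rfl fun j _ => hip (s i) (s j) (f i) (f j)
  have hipΦ : ip (Φ u x) (Φ u x) =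
      ∑ i, ∑ j, ⟪(f j : E), φ (star (s j) * (star u * (u * s i))) (f i)⟫ := by
    rw [hΦx, hsumL]
    refine Finset.sum_congr rfl fun i _ => ?_
    rw [hsumR]
    refine Finset.sum_congr rfl fun j _ => ?_
    rw [hip (u * s i) (u * s j) (f i) (f j)]
    congr 2
    rw [star_mul]
    rw [mul_assoc]
  have hle : ip (Φ u x) (Φ u x) ≤ (c : ℂ) * ip x x := by
    rw [hipΦ, hipxx]
    exact hα n s f
  have hre : (ip (Φ u x) (Φ u x)).re ≤ c * (ip x x).re := by
    have h := (Complex.le_def.mp hle).1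
    simpa [Complex.re_ofReal_mul] using h
  calc Real.sqrt (ip (Φ u x) (Φ u x)).re ≤ Real.sqrt (c * (ip x x).re) :=
        Real.sqrt_le_sqrt hre
    _ = Real.sqrt c * Real.sqrt (ip x x).re := Real.sqrt_mul hc _
end
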